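/- Sensitivity of the linear-regression tuning utility (Theorem 1 of the paper): let c₀ ≤ c₁ bound the possible response values, let ‖xᵢ‖₂ ≤ √p, ‖θ‖₂ ≤ √p, and |yᵢ| bounded so that all predictions g(xᵢ) = xᵢθ and responses yᵢ lie in [c₀, c₁]. Define u(D, g) = −∑ᵢ (g(xᵢ) − yᵢ)². Then the ℓ1-global sensitivity of u (over neighboring datasets, bounded or unbounded) equals (c₁ − c₀)². -/

import Mathlib

/-! Only the modified observation contributes to the difference of the two utilities, so the
difference is `(a - b)² - (c - d)²` with `a, b, c, d ∈ [c₀, c₁]`: two numbers in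
`[0, (c₁ - c₀)²]`, whose distance is at most `(c₁ - c₀)²`. The bound is attained by changing one
prediction from `c₀` to `c₁` while every response is `c₀`; predictions `c` are realised by
`θ = 1` and the constant row `c / p`, whose norm stays below `√p` because `|c| ≤ p`. -/

open Finset

theorem Fintype.sum_sub_sum_eq_of_eq_of_ne {ι M : Type*} [Fintype ι] [AddCommGroup M]
    {f g : ι → M} (j : ι) (h : ∀ i, i ≠ j → f i = g i) :
    ∑ i, f i - ∑ i, g i = f j - g j := by
  rw [← sum_sub_distrib, sum_eq_single j fun i hi => sub_eq_zero_of_eq (h i hi)]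

theorem sq_sub_le_sq_of_mem_Icc {a b c₀ c₁ : ℝ} (ha : a ∈ Set.Icc c₀ c₁)
    (hb : b ∈ Set.Icc c₀ c₁) : (a - b) ^ 2 ≤ (c₁ - c₀) ^ 2 := by
  rw [← sq_abs]
  exact pow_le_pow_left₀ (abs_nonneg _) (abs_sub_le_of_le_of_le ha.1 ha.2 hb.1 hb.2) 2

theorem abs_sq_sub_sq_le_of_mem_Icc {a b c d c₀ c₁ : ℝ} (ha : a ∈ Set.Icc c₀ c₁)
    (hb : b ∈ Set.Icc c₀ c₁) (hc : c ∈ Set.Icc c₀ c₁) (hd : d ∈ Set.Icc c₀ c₁) :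
    |(a - b) ^ 2 - (c - d) ^ 2| ≤ (c₁ - c₀) ^ 2 :=
  abs_sub_le_of_nonneg_of_le (sq_nonneg _) (sq_sub_le_sq_of_mem_Icc ha hb)
    (sq_nonneg _) (sq_sub_le_sq_of_mem_Icc hc hd)

section ConstRow

variable {p : ℕ} {c : ℝ}

/-- When `p = 0` the hypothesis forces `c = 0`, which is what the empty sum gives. -/
theorem sum_const_div_natCast (hc : |c| ≤ p) : ∑ _ : Fin p, c / p = c := by
  rcases Nat.eq_zero_or_pos p with rfl | hp
  · simpa using (abs_nonpos_iff.mp (by simpa using hc)).symm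
  · simp [mul_div_cancel₀ c (Nat.cast_ne_zero.mpr hp.ne')]

theorem sqrt_sum_sq_const_div_natCast_le (hc : |c| ≤ p) :
    Real.sqrt (∑ _ : Fin p, (c / p) ^ 2) ≤ Real.sqrt p := by
  refine Real.sqrt_le_sqrt ?_
  rcases Nat.eq_zero_or_pos p with rfl | hp
  · simp
  · have hp' : (0 : ℝ) < p := Nat.cast_pos.mpr hp
    have hcp : c ^ 2 ≤ (p : ℝ) ^ 2 := sq_le_sq' (abs_le.mp hc).1 (abs_le.mp hc).2
    rw [sum_const, card_univ, Fintype.card_fin, nsmul_eq_mul, div_pow, mul_div_assoc',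
      div_le_iff₀ (pow_pos hp' 2)]
    nlinarith

end ConstRow

theorem tuning_utility_sensitivity_general (n p : ℕ) (hn : 0 < n)
    (c₀ c₁ : ℝ) (hc : c₀ ≤ c₁) (hc₀ : -(p : ℝ) ≤ c₀) (hc₁ : c₁ ≤ (p : ℝ)) :
    sSup {s : ℝ | ∃ (θ : Fin p → ℝ) (x₁ x₂ : Fin n → Fin p → ℝ) (y₁ y₂ : Fin n → ℝ),
        Real.sqrt (∑ k, θ k ^ 2) ≤ Real.sqrt p ∧
        (∀ i, Real.sqrt (∑ k, x₁ i k ^ 2) ≤ Real.sqrt p ∧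
          (∑ k, x₁ i k * θ k) ∈ Set.Icc c₀ c₁ ∧ y₁ i ∈ Set.Icc c₀ c₁) ∧
        (∀ i, Real.sqrt (∑ k, x₂ i k ^ 2) ≤ Real.sqrt p ∧
          (∑ k, x₂ i k * θ k) ∈ Set.Icc c₀ c₁ ∧ y₂ i ∈ Set.Icc c₀ c₁) ∧
        (∃ j, ∀ i, i ≠ j → x₁ i = x₂ i ∧ y₁ i = y₂ i) ∧
        s = |(-(∑ i, ((∑ k, x₁ i k * θ k) - y₁ i) ^ 2)) -
              (-(∑ i, ((∑ k, x₂ i k * θ k) - y₂ i) ^ 2))|} = (c₁ - c₀) ^ 2 := by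
  refine IsGreatest.csSup_eq ⟨?_, ?_⟩
  · have h₀ : |c₀| ≤ p := abs_le.mpr ⟨hc₀, hc.trans hc₁⟩
    have h₁ : |c₁| ≤ p := abs_le.mpr ⟨hc₀.trans hc, hc₁⟩
    have hrow : ∀ c : ℝ, |c| ≤ p → c ∈ Set.Icc c₀ c₁ → ∀ x : Fin p → ℝ, x = (fun _ => c / p) →
        Real.sqrt (∑ k, x k ^ 2) ≤ Real.sqrt p ∧ (∑ k, x k * 1) ∈ Set.Icc c₀ c₁ ∧
          c₀ ∈ Set.Icc c₀ c₁ := by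
      rintro c hcp hcI x rfl
      simp only [mul_one, sum_const_div_natCast hcp]
      exact ⟨sqrt_sum_sq_const_div_natCast_le hcp, hcI, le_rfl, hc⟩
    set j : Fin n := ⟨0, hn⟩
    set x₁ : Fin n → Fin p → ℝ := fun _ _ => c₀ / p
    set x₂ := Function.update x₁ j (fun _ => c₁ / p)
    have hx : ∀ i, i ≠ j → x₁ i = x₂ i := fun i hi => (Function.update_of_ne hi _ _).symm
    refine ⟨fun _ => 1, x₁, x₂, fun _ => c₀, fun _ => c₀, by simp, fun i => ?_, fun i => ?_,
      ⟨j, fun i hi => ⟨hx i hi, rfl⟩⟩, ?_⟩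
    · exact hrow c₀ h₀ ⟨le_rfl, hc⟩ _ rfl
    · by_cases hi : i = j
      · exact hrow c₁ h₁ ⟨hc, le_rfl⟩ _ (hi ▸ Function.update_self j _ x₁)
      · exact hrow c₀ h₀ ⟨le_rfl, hc⟩ _ (hx i hi).symm
    · rw [neg_sub_neg, Fintype.sum_sub_sum_eq_of_eq_of_ne j (fun i hi => by rw [hx i hi])]
      simp only [x₂, Function.update_self, x₁, mul_one, sum_const_div_natCast h₀,
        sum_const_div_natCast h₁, sub_self]
      simp
  · rintro s ⟨θ, x₁, x₂, y₁, y₂, -, h₁, h₂, ⟨j, hj⟩, rfl⟩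
    rw [neg_sub_neg, Fintype.sum_sub_sum_eq_of_eq_of_ne j
      (fun i hi => by rw [(hj i hi).1, (hj i hi).2])]
    exact abs_sq_sub_sq_le_of_mem_Icc (h₂ j).2.1 (h₂ j).2.2 (h₁ j).2.1 (h₁ j).2.2

/-- Sensitivity of the linear-regression tuning utility (Theorem 1 of the paper):
with responses and predictions bounded in [c₀, c₁], ‖xᵢ‖₂ ≤ √p and ‖θ‖₂ ≤ √p, the
ℓ1-global sensitivity of u(D, g) = −∑ᵢ (g(xᵢ) − yᵢ)² over neighboring datasets
(differing in one observation) equals (c₁ − c₀)². -/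
theorem tuning_utility_sensitivity (n p : ℕ) (hn : 0 < n) (hp : 0 < p)
    (c₀ c₁ : ℝ) (hc : c₀ ≤ c₁) (hc₀ : -(p : ℝ) ≤ c₀) (hc₁ : c₁ ≤ (p : ℝ)) :
    sSup {s : ℝ | ∃ (θ : Fin p → ℝ) (x₁ x₂ : Fin n → Fin p → ℝ) (y₁ y₂ : Fin n → ℝ),
        Real.sqrt (∑ k, θ k ^ 2) ≤ Real.sqrt p ∧
        (∀ i, Real.sqrt (∑ k, x₁ i k ^ 2) ≤ Real.sqrt p ∧
          (∑ k, x₁ i k * θ k) ∈ Set.Icc c₀ c₁ ∧ y₁ i ∈ Set.Icc c₀ c₁) ∧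
        (∀ i, Real.sqrt (∑ k, x₂ i k ^ 2) ≤ Real.sqrt p ∧
          (∑ k, x₂ i k * θ k) ∈ Set.Icc c₀ c₁ ∧ y₂ i ∈ Set.Icc c₀ c₁) ∧
        (∃ j, ∀ i, i ≠ j → x₁ i = x₂ i ∧ y₁ i = y₂ i) ∧
        s = |(-(∑ i, ((∑ k, x₁ i k * θ k) - y₁ i) ^ 2)) -
              (-(∑ i, ((∑ k, x₂ i k * θ k) - y₂ i) ^ 2))|} = (c₁ - c₀) ^ 2 :=
  tuning_utility_sensitivity_general n p hn c₀ c₁ hc hc₀ hc₁
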